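/- arXiv:2411.13868 — 2 statements merged into one kernel-verified Lean document; each statement's English description precedes it below -/
import Mathlib

section
/- For any probability distribution P on a finite vocabulary W with all P_w > 0, the Aaronson score expectation satisfies n-free bounds: 1 + (π²/6 − 1)·Ent(P) ≤ E_{Y∼μ_{1,P}}[−log(1−Y)] ≤ 1 + Ent(P), where Ent(P) = −Σ_w P_w log P_w and μ_{1,P}(Y ≤ r) = Σ_w P_w r^{1/P_w}. -/
/-!
Expanding `-log (1 - r) = ∑ₖ r^(k+1)/(k+1)` and integrating termwise, a token with `t = 1/P_w ≥ 1`
contributes `P_w · H(t)`, where `H(t) = ∑ₖ (1/(k+1) - 1/(t+k+1)) = ψ(t+1) + γ`. As `H(1) = 1`, both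
bounds follow from `(π²/6 - 1)/t ≤ H'(t) ≤ 1/t` for `t ≥ 1`, where `H'(t) = ∑ₖ (t+k+1)⁻²`. The upper
bound compares `H'(t)` with the telescoping series `∑ₖ 1/((t+k)(t+k+1)) = 1/t`. For the lower bound,
`t · H'(t)` equals `ζ(2) - 1` at `t = 1` and is nondecreasing: its derivative
`H'(t) - 2t ∑ₖ (t+k+1)⁻³` is nonnegative by two more telescoping comparisons. Averaging
`1 + c · log (1/P_w)` against `P` gives `1 + c · Ent(P)`.
-/

open MeasureTheory Real Set Filter Topology

lemma hasSum_sub_succ_of_antitone {g : ℕ → ℝ} {l : ℝ} (hg : Antitone g)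
    (hl : Tendsto g atTop (𝓝 l)) : HasSum (fun n => g n - g (n + 1)) (g 0 - l) := by
  rw [hasSum_iff_tendsto_nat_of_nonneg fun n => sub_nonneg.2 (hg n.le_succ)]
  simpa only [Finset.sum_range_sub'] using tendsto_const_nhds.sub hl

lemma hasSum_inv_add_pow_sub_succ {a : ℝ} (ha : 0 < a) {n : ℕ} (hn : n ≠ 0) :
    HasSum (fun k : ℕ => ((a + k) ^ n)⁻¹ - ((a + k + 1) ^ n)⁻¹) (a ^ n)⁻¹ := by
  have hanti : Antitone fun k : ℕ => ((a + k) ^ n)⁻¹ := fun i j hij => by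
    have : (a + i) ≤ a + j := by gcongr
    exact inv_anti₀ (by positivity) (pow_le_pow_left₀ (by positivity) this n)
  have hlim : Tendsto (fun k : ℕ => ((a + k) ^ n)⁻¹) atTop (𝓝 0) :=
    ((tendsto_pow_atTop hn).comp
      (tendsto_atTop_add_const_left _ a tendsto_natCast_atTop_atTop)).inv_tendsto_atTop
  simpa [add_assoc] using hasSum_sub_succ_of_antitone hanti hlim

lemma summable_inv_add_one_pow {s : ℝ} (hs : 0 ≤ s) {n : ℕ} (hn : 2 ≤ n) :
    Summable fun k : ℕ => ((s + k + 1) ^ n)⁻¹ := by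
  have hbase : Summable fun k : ℕ => (((k + 1 : ℕ) : ℝ) ^ n)⁻¹ :=
    (summable_nat_add_iff 1).2 (Real.summable_nat_pow_inv.2 (by omega))
  refine hbase.of_nonneg_of_le (fun k => by positivity) fun k => ?_
  push_cast
  gcongr
  linarith

/-- `realHarmonic t = ψ(t + 1) + γ` extends the harmonic numbers `H_n` to real `t`. -/
noncomputable def realHarmonic (t : ℝ) : ℝ := ∑' k : ℕ, (((k : ℝ) + 1)⁻¹ - (t + k + 1)⁻¹)

/-- `realHarmonicDeriv s = ψ'(s + 1)`. -/
noncomputable def realHarmonicDeriv (s : ℝ) : ℝ := ∑' k : ℕ, ((s + k + 1) ^ 2)⁻¹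

lemma hasSum_realHarmonic_one :
    HasSum (fun k : ℕ => ((k : ℝ) + 1)⁻¹ - ((1 : ℝ) + k + 1)⁻¹) 1 := by
  simpa [add_comm] using hasSum_inv_add_pow_sub_succ one_pos one_ne_zero

lemma realHarmonic_one : realHarmonic 1 = 1 :=
  hasSum_realHarmonic_one.tsum_eq

lemma realHarmonicDeriv_one : realHarmonicDeriv 1 = π ^ 2 / 6 - 1 := by
  have h := (hasSum_nat_add_iff' (f := fun n : ℕ => ((n : ℝ) ^ 2)⁻¹) 2).2
    (by simpa [one_div] using hasSum_zeta_two)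
  have h2 : ∑ i ∈ Finset.range 2, ((i : ℝ) ^ 2)⁻¹ = 1 := by norm_num [Finset.sum_range_succ]
  rw [h2] at h
  have hshift :
      (fun k : ℕ => ((1 + (k : ℝ) + 1) ^ 2)⁻¹) = fun n => (((n + 2 : ℕ) : ℝ) ^ 2)⁻¹ := by
    ext k
    push_cast
    ring
  rw [realHarmonicDeriv, hshift, h.tsum_eq]

lemma hasDerivAt_inv_add_const_pow {c y : ℝ} (n : ℕ) (h : y + c ≠ 0) :
    HasDerivAt (fun x => ((x + c) ^ n)⁻¹) (-n * ((y + c) ^ (n + 1))⁻¹) y := by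
  refine ((((hasDerivAt_id y).add_const c).fun_pow n).inv (pow_ne_zero n h)).congr_deriv ?_
  rcases n with _ | n
  · simp
  · simp only [id, Nat.cast_add, Nat.cast_one, add_tsub_cancel_right, mul_one]
    field_simp
    ring

lemma hasDerivAt_realHarmonic {t : ℝ} (ht : 0 < t) :
    HasDerivAt realHarmonic (realHarmonicDeriv t) t := by
  refine hasDerivAt_tsum_of_isPreconnected
    (g := fun (k : ℕ) (y : ℝ) => ((k : ℝ) + 1)⁻¹ - (y + k + 1)⁻¹)
    (g' := fun (k : ℕ) (y : ℝ) => ((y + k + 1) ^ 2)⁻¹) (summable_inv_add_one_pow le_rfl le_rfl)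
    isOpen_Ioi isPreconnected_Ioi (fun k y (hy : 0 < y) => ?_) (fun k y (hy : 0 < y) => ?_)
    (zero_lt_one' ℝ) hasSum_realHarmonic_one.summable ht
  · have h := (hasDerivAt_inv_add_const_pow (c := (k : ℝ) + 1) (y := y) 1
      (by positivity)).const_sub (((k : ℝ) + 1)⁻¹)
    simpa only [pow_one, Nat.cast_one, neg_one_mul, neg_neg, ← add_assoc] using h
  · rw [norm_of_nonneg (by positivity)]
    gcongr

lemma hasDerivAt_realHarmonicDeriv {s : ℝ} (hs : 0 < s) :
    HasDerivAt realHarmonicDeriv (-2 * ∑' k : ℕ, ((s + k + 1) ^ 3)⁻¹) s := by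
  rw [← tsum_mul_left]
  refine hasDerivAt_tsum_of_isPreconnected
    (g := fun (k : ℕ) (y : ℝ) => ((y + k + 1) ^ 2)⁻¹)
    (g' := fun (k : ℕ) (y : ℝ) => -2 * ((y + k + 1) ^ 3)⁻¹)
    ((summable_inv_add_one_pow le_rfl (by norm_num : 2 ≤ 3)).mul_left 2)
    isOpen_Ioi isPreconnected_Ioi (fun k y (hy : 0 < y) => ?_) (fun k y (hy : 0 < y) => ?_)
    hs (summable_inv_add_one_pow hs.le le_rfl) hs
  · have h := hasDerivAt_inv_add_const_pow (c := (k : ℝ) + 1) (y := y) 2 (by positivity)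
    simpa only [Nat.cast_ofNat, ← add_assoc] using h
  · rw [norm_mul, norm_neg, norm_two, norm_of_nonneg (by positivity)]
    gcongr

lemma inv_add_one_le_realHarmonicDeriv {s : ℝ} (hs : 0 ≤ s) :
    (s + 1)⁻¹ ≤ realHarmonicDeriv s := by
  have htel := hasSum_inv_add_pow_sub_succ (a := s + 1) (by positivity) one_ne_zero
  simp only [pow_one] at htel
  refine hasSum_le (fun k => ?_) htel (summable_inv_add_one_pow hs le_rfl).hasSum
  have hx : 0 < s + 1 + k := by positivity
  rw [inv_sub_inv hx.ne' (by positivity), add_sub_cancel_left, one_div]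
  exact inv_anti₀ (by positivity) (by nlinarith)

lemma realHarmonicDeriv_le_inv {s : ℝ} (hs : 0 < s) : realHarmonicDeriv s ≤ s⁻¹ := by
  have htel := hasSum_inv_add_pow_sub_succ hs one_ne_zero
  simp only [pow_one] at htel
  refine hasSum_le (fun k => ?_) (summable_inv_add_one_pow hs.le le_rfl).hasSum htel
  have hx : 0 < s + k := by positivity
  rw [inv_sub_inv hx.ne' (by positivity), add_sub_cancel_left, one_div]
  exact inv_anti₀ (by positivity) (by nlinarith)

lemma tsum_inv_add_one_pow_three_le {s : ℝ} (hs : 0 ≤ s) :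
    ∑' k : ℕ, ((s + k + 1) ^ 3)⁻¹ ≤ (2 * (s + 1 / 2) ^ 2)⁻¹ := by
  have hterm : ∀ k : ℕ,
      2 * ((s + k + 1) ^ 3)⁻¹ ≤ ((s + 1 / 2 + k) ^ 2)⁻¹ - ((s + 1 / 2 + k + 1) ^ 2)⁻¹ := by
    intro k
    have hx : 0 < s + 1 / 2 + k := by positivity
    rw [show s + k + 1 = s + 1 / 2 + k + 1 / 2 by ring,
      inv_sub_inv (by positivity) (by positivity), ← div_eq_mul_inv,
      div_le_div_iff₀ (by positivity) (by positivity)]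
    nlinarith [mul_pos hx hx, sq_nonneg (s + 1 / 2 + k)]
  have hle := hasSum_le hterm
    ((summable_inv_add_one_pow hs (by norm_num : 2 ≤ 3)).hasSum.mul_left 2)
    (hasSum_inv_add_pow_sub_succ (a := s + 1 / 2) (by positivity) two_ne_zero)
  rw [mul_inv]
  linarith

lemma monotoneOn_Ici_of_hasDerivAt_nonneg {f f' : ℝ → ℝ} {a : ℝ}
    (hf : ∀ x ∈ Ici a, HasDerivAt f (f' x) x) (hf' : ∀ x ∈ Ioi a, 0 ≤ f' x) :
    MonotoneOn f (Ici a) := by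
  refine monotoneOn_of_hasDerivWithinAt_nonneg (convex_Ici a) (HasDerivAt.continuousOn hf)
    (fun x hx => ?_) (by rwa [interior_Ici])
  rw [interior_Ici] at hx ⊢
  exact (hf x (mem_Ici.2 hx.le)).hasDerivWithinAt

lemma pi_sq_div_six_sub_one_le_mul_realHarmonicDeriv {s : ℝ} (hs : 1 ≤ s) :
    π ^ 2 / 6 - 1 ≤ s * realHarmonicDeriv s := by
  have hmono : MonotoneOn (fun x => x * realHarmonicDeriv x) (Ici 1) := by
    refine monotoneOn_Ici_of_hasDerivAt_nonneg
      (fun x (hx : 1 ≤ x) => (hasDerivAt_id x).mul (hasDerivAt_realHarmonicDeriv (by linarith)))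
      fun x (hx : 1 < x) => ?_
    have hx0 : 0 ≤ x := by linarith
    have hcube : x * (2 * ∑' k : ℕ, ((x + k + 1) ^ 3)⁻¹) ≤ realHarmonicDeriv x :=
      calc x * (2 * ∑' k : ℕ, ((x + k + 1) ^ 3)⁻¹)
          ≤ x * (2 * (2 * (x + 1 / 2) ^ 2)⁻¹) := by gcongr; exact tsum_inv_add_one_pow_three_le hx0
        _ = x / (x + 1 / 2) ^ 2 := by field_simp
        _ ≤ (x + 1)⁻¹ := by
          rw [div_le_iff₀ (by positivity), inv_mul_eq_div, le_div_iff₀ (by positivity)]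
          nlinarith
        _ ≤ realHarmonicDeriv x := inv_add_one_le_realHarmonicDeriv hx0
    simp only [id, one_mul]
    linarith
  simpa [realHarmonicDeriv_one] using hmono self_mem_Ici hs hs

lemma realHarmonic_le_one_add_log {t : ℝ} (ht : 1 ≤ t) : realHarmonic t ≤ 1 + log t := by
  have hmono : MonotoneOn (fun x => log x - realHarmonic x) (Ici 1) :=
    monotoneOn_Ici_of_hasDerivAt_nonneg
      (fun x (hx : 1 ≤ x) => (hasDerivAt_log (by positivity)).sub
        (hasDerivAt_realHarmonic (by positivity)))
      fun x (hx : 1 < x) => sub_nonneg.2 (realHarmonicDeriv_le_inv (by positivity))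
  have := hmono self_mem_Ici ht ht
  simp only [log_one, realHarmonic_one] at this
  linarith

lemma one_add_mul_log_le_realHarmonic {t : ℝ} (ht : 1 ≤ t) :
    1 + (π ^ 2 / 6 - 1) * log t ≤ realHarmonic t := by
  have hmono : MonotoneOn (fun x => realHarmonic x - (π ^ 2 / 6 - 1) * log x) (Ici 1) :=
    monotoneOn_Ici_of_hasDerivAt_nonneg
      (fun x (hx : 1 ≤ x) => (hasDerivAt_realHarmonic (by positivity)).sub
        ((hasDerivAt_log (by positivity)).const_mul _))
      fun x (hx : 1 < x) => by
        have := pi_sq_div_six_sub_one_le_mul_realHarmonicDeriv hx.le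
        rw [sub_nonneg, ← div_eq_mul_inv, div_le_iff₀ (by positivity)]
        linarith
  have := hmono self_mem_Ici ht ht
  simp only [log_one, realHarmonic_one] at this
  linarith

lemma integral_Ioo_zero_one_rpow {p : ℝ} (hp : -1 < p) :
    ∫ r in Ioo (0 : ℝ) 1, r ^ p = (p + 1)⁻¹ := by
  rw [← integral_Ioc_eq_integral_Ioo, ← intervalIntegral.integral_of_le zero_le_one,
    integral_rpow (Or.inl hp), one_rpow, zero_rpow (by linarith), sub_zero, one_div]

lemma hasSum_rpow_mul_neg_log_one_sub (t : ℝ) {r : ℝ} (hr : r ∈ Ioo (0 : ℝ) 1) :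
    HasSum (fun k : ℕ => r ^ (t + k) / (k + 1)) (r ^ (t - 1) * -log (1 - r)) := by
  have h := (hasSum_pow_div_log_of_abs_lt_one (abs_lt.2 ⟨by linarith [hr.1], hr.2⟩)).mul_left
    (r ^ (t - 1))
  have hterm : (fun k : ℕ => r ^ (t + k) / (k + 1))
      = fun k : ℕ => r ^ (t - 1) * (r ^ (k + 1) / (k + 1)) := by
    funext k
    rw [mul_div_assoc', ← rpow_natCast, ← rpow_add hr.1]
    push_cast
    ring_nf
  rwa [hterm]

lemma integral_rpow_mul_neg_log_one_sub {t : ℝ} (ht : 0 < t) :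
    ∫ r in Ioo (0 : ℝ) 1, r ^ (t - 1) * -log (1 - r) = realHarmonic t / t := by
  have hexp : ∀ k : ℕ, -1 < t + k := fun k => by linarith [(k.cast_nonneg : (0 : ℝ) ≤ k)]
  have hint : ∀ k : ℕ,
      ∫ r in Ioo (0 : ℝ) 1, r ^ (t + k) / (k + 1) = ((k + 1) * (t + k + 1))⁻¹ := fun k => by
    rw [integral_div, integral_Ioo_zero_one_rpow (hexp k), div_eq_mul_inv, mul_inv, mul_comm,
      add_right_comm]
  have hnorm : ∀ k : ℕ, ∫ r in Ioo (0 : ℝ) 1, ‖r ^ (t + k) / (k + 1)‖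
      = ∫ r in Ioo (0 : ℝ) 1, r ^ (t + k) / (k + 1) := fun k =>
    setIntegral_congr_fun measurableSet_Ioo fun r hr => norm_of_nonneg (by have := hr.1; positivity)
  have hsummable : Summable fun k : ℕ => ∫ r in Ioo (0 : ℝ) 1, ‖r ^ (t + k) / (k + 1)‖ := by
    simp_rw [hnorm, hint]
    refine (summable_inv_add_one_pow le_rfl le_rfl).of_nonneg_of_le (fun k => by positivity)
      fun k => inv_anti₀ (by positivity) (by nlinarith)
  have hpartial : ∀ k : ℕ,
      ((k + 1) * (t + k + 1))⁻¹ = t⁻¹ * (((k : ℝ) + 1)⁻¹ - (t + k + 1)⁻¹) := fun k => by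
    field_simp
    ring
  rw [setIntegral_congr_fun measurableSet_Ioo
      fun r hr => (hasSum_rpow_mul_neg_log_one_sub t hr).tsum_eq.symm,
    ← integral_tsum_of_summable_integral_norm (fun k =>
      ((intervalIntegral.integrableOn_Ioo_rpow_iff zero_lt_one).2 (hexp k)).div_const _) hsummable]
  simp_rw [hint, hpartial, tsum_mul_left, realHarmonic, div_eq_inv_mul]

lemma integrableOn_rpow_mul_neg_log_one_sub {t : ℝ} (ht : 1 ≤ t) :
    IntegrableOn (fun r => r ^ (t - 1) * -log (1 - r)) (Ioo (0 : ℝ) 1) := by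
  have hlog : IntegrableOn (fun r => -log (1 - r)) (Ioo (0 : ℝ) 1) := by
    have h := (intervalIntegral.intervalIntegrable_log' (a := 1) (b := 0)).comp_sub_left 1
    norm_num at h
    exact ((intervalIntegrable_iff_integrableOn_Ioo_of_le zero_le_one).1 h).neg
  refine hlog.bdd_mul (c := 1)
    ((continuous_rpow_const (by linarith)).aestronglyMeasurable) ?_
  refine (ae_restrict_iff' measurableSet_Ioo).2 (ae_of_all _ fun r hr => ?_)
  rw [norm_of_nonneg (rpow_nonneg hr.1.le _)]
  exact rpow_le_one hr.1.le hr.2.le (by linarith)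

lemma integral_sum_rpow_mul_neg_log_one_sub {W : Type*} [Fintype W] {t : W → ℝ}
    (ht : ∀ w, 1 ≤ t w) :
    ∫ r in Ioo (0 : ℝ) 1, (∑ w, r ^ (t w - 1)) * -log (1 - r)
      = ∑ w, realHarmonic (t w) / t w := by
  simp_rw [Finset.sum_mul]
  rw [integral_finsetSum _ fun w _ => integrableOn_rpow_mul_neg_log_one_sub (ht w)]
  exact Finset.sum_congr rfl fun w _ => integral_rpow_mul_neg_log_one_sub (by linarith [ht w])

/-- Bounds on the expectation of the Aaronson score `−log(1−Y)` under the Gumbel-max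
alternative `μ_{1,P}` (with density `f_{1,P}(r) = ∑_w r^{1/P_w − 1}` on `(0,1)`):
`1 + (π²/6 − 1)·Ent(P) ≤ E_{1,P}[−log(1−Y)] ≤ 1 + Ent(P)`, where
`Ent(P) = −∑_w P_w log P_w`. -/
theorem aaronson_score_expectation_bounds {W : Type*} [Fintype W]
    (P : W → ℝ) (hpos : ∀ w, 0 < P w) (hsum : ∑ w, P w = 1) :
    1 + (Real.pi ^ 2 / 6 - 1) * (-∑ w, P w * Real.log (P w))
      ≤ (∫ r in Set.Ioo (0:ℝ) 1, (∑ w, r ^ (1 / P w - 1)) * (-Real.log (1 - r))) ∧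
    (∫ r in Set.Ioo (0:ℝ) 1, (∑ w, r ^ (1 / P w - 1)) * (-Real.log (1 - r)))
      ≤ 1 + (-∑ w, P w * Real.log (P w)) := by
  have hinv : ∀ w, 1 ≤ 1 / P w := fun w => by
    rw [le_div_iff₀ (hpos w), one_mul, ← hsum]
    exact Finset.single_le_sum (fun w _ => (hpos w).le) (Finset.mem_univ w)
  have hentropy : ∀ c : ℝ,
      ∑ w, P w * (1 + c * log (1 / P w)) = 1 + c * -∑ w, P w * log (P w) := fun c => by
    simp only [one_div, log_inv, mul_add, mul_one, Finset.sum_add_distrib, hsum]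
    rw [← Finset.sum_neg_distrib, Finset.mul_sum]
    congr 1
    exact Finset.sum_congr rfl fun w _ => by ring
  have hscore : ∀ w, realHarmonic (1 / P w) / (1 / P w) = P w * realHarmonic (1 / P w) :=
    fun w => by rw [div_div_eq_mul_div, div_one, mul_comm]
  rw [integral_sum_rpow_mul_neg_log_one_sub hinv]
  simp_rw [hscore]
  constructor
  · rw [← hentropy]
    exact Finset.sum_le_sum fun w _ =>
      mul_le_mul_of_nonneg_left (one_add_mul_log_le_realHarmonic (hinv w)) (hpos w).le
  · rw [← one_mul (-∑ w, P w * log (P w)), ← hentropy]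
    exact Finset.sum_le_sum fun w _ => mul_le_mul_of_nonneg_left
      (by rw [one_mul]; exact realHarmonic_le_one_add_log (hinv w)) (hpos w).le
end

section
/- For r ∈ [0,1] and any probability distribution P on a finite vocabulary, F_{1,P}(r) = Σ_w P_w r^{1/P_w} is a convex function of P (for fixed r), and hence sup over the Δ-regular class P_Δ = {P : max_w P_w ≤ 1−Δ} of F_{1,P}(r) is attained at an extreme point; when Δ < 1/2 the extreme points of P_Δ are permutations of (1−Δ, Δ, 0, …, 0), so sup_{P∈P_Δ} F_{1,P}(r) = (1−Δ) r^{1/(1−Δ)} + Δ r^{1/Δ}. -/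
/-!
Writing `h p = p * r ^ (1 / p)`, on `p > 0` the function `h` is the perspective `p * φ (1 / p)` of
the convex function `φ u = r ^ u`, hence convex; it extends convexly to `p = 0` because
`h p ≤ p * r ^ (1 / s)` whenever `p ≤ s`. Summing over coordinates gives convexity of `F`.

For the supremum, let `m = P i` be the largest mass and `x = max m (1/2)`. Every other mass is at
most `min m (1 - m) ≤ 1 - x`, so the same comparison gives
`F P ≤ m r^(1/x) + (1 - m) r^(1/(1-x)) ≤ ψ x`, where `ψ x = h x + h (1 - x)`. Being convex and
symmetric about `1/2`, `ψ` increases on `[1/2, 1]`, so `F P ≤ ψ (1 - Δ)`, the value of `F` at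
`(1 - Δ, Δ, 0, …, 0)`.
-/

open Real Set

theorem ConvexOn.finset_sum {𝕜 E β ι : Type*} [Semiring 𝕜] [PartialOrder 𝕜] [AddCommMonoid E]
    [AddCommMonoid β] [PartialOrder β] [IsOrderedAddMonoid β] [SMul 𝕜 E] [Module 𝕜 β]
    {s : Set E} {t : Finset ι} {f : ι → E → β} (hs : Convex 𝕜 s)
    (hf : ∀ i ∈ t, ConvexOn 𝕜 s (f i)) : ConvexOn 𝕜 s (fun x => ∑ i ∈ t, f i x) := by
  simpa only [← Finset.sum_apply] using
    Finset.sum_induction f (ConvexOn 𝕜 s) (fun _ _ => ConvexOn.add) (convexOn_const (0 : β) hs) hf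

theorem ConvexOn.sum_comp_apply {ι : Type*} [Fintype ι] {s : Set ℝ} {f : ℝ → ℝ}
    (hf : ConvexOn ℝ s f) : ConvexOn ℝ (univ.pi fun _ : ι => s) (fun x => ∑ i, f (x i)) :=
  ConvexOn.finset_sum (convex_pi fun _ _ => hf.1) fun i _ =>
    (hf.comp_linearMap (LinearMap.proj (R := ℝ) (φ := fun _ : ι => ℝ) i)).subset
      (fun _ hx => mem_univ_pi.1 hx i) (convex_pi fun _ _ => hf.1)

theorem ConvexOn.mul_comp_inv {φ : ℝ → ℝ} (hφ : ConvexOn ℝ (Ioi 0) φ) :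
    ConvexOn ℝ (Ioi 0) (fun p => p * φ p⁻¹) := by
  refine ⟨convex_Ioi 0, fun p (hp : 0 < p) q (hq : 0 < q) a b ha hb hab => ?_⟩
  have hs : 0 < a * p + b * q := by
    rcases ha.eq_or_lt with rfl | ha
    · rw [zero_add] at hab; simp [hab, hq]
    · positivity
  set s := a * p + b * q
  -- `s⁻¹` is the convex combination of `p⁻¹` and `q⁻¹` with weights `a p / s` and `b q / s`.
  have key := hφ.2 (inv_pos.2 hp) (inv_pos.2 hq) (div_nonneg (mul_nonneg ha hp.le) hs.le)
    (div_nonneg (mul_nonneg hb hq.le) hs.le) (by rw [← add_div, div_self hs.ne'])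
  have hinv : a * p / s * p⁻¹ + b * q / s * q⁻¹ = s⁻¹ := by
    field_simp
    exact hab
  simp only [smul_eq_mul, hinv] at key ⊢
  calc s * φ s⁻¹ ≤ s * (a * p / s * φ p⁻¹ + b * q / s * φ q⁻¹) :=
        mul_le_mul_of_nonneg_left key hs.le
    _ = a * (p * φ p⁻¹) + b * (q * φ q⁻¹) := by field_simp

theorem ConvexOn.Ici_of_Ioi {f : ℝ → ℝ} (hf : ConvexOn ℝ (Ioi 0) f) (h0 : f 0 = 0)
    (hstar : ∀ x ≥ 0, ∀ t ∈ Ioo (0 : ℝ) 1, f (t * x) ≤ t * f x) : ConvexOn ℝ (Ici 0) f := by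
  refine convexOn_iff_forall_pos.2
    ⟨convex_Ici 0, fun p (hp : 0 ≤ p) q (hq : 0 ≤ q) a b ha hb hab => ?_⟩
  simp only [smul_eq_mul]
  rcases hp.eq_or_lt with rfl | hp
  · simpa [h0] using hstar q hq b ⟨hb, by linarith⟩
  rcases hq.eq_or_lt with rfl | hq
  · simpa [h0] using hstar p hp.le a ⟨ha, by linarith⟩
  exact hf.2 hp hq ha.le hb.le hab

theorem convexOn_rpow_left_Ioi {r : ℝ} (hr : 0 ≤ r) :
    ConvexOn ℝ (Ioi (0 : ℝ)) (fun u => r ^ u) := by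
  rcases hr.eq_or_lt with rfl | hr
  · exact (convexOn_const 0 (convex_Ioi 0)).congr fun u (hu : 0 < u) => (zero_rpow hu.ne').symm
  · exact (convexOn_rpow_left hr).subset (subset_univ _) (convex_Ioi 0)

theorem mul_rpow_one_div_le_mul_rpow_one_div {r p s : ℝ} (hr0 : 0 ≤ r) (hr1 : r ≤ 1)
    (hp : 0 ≤ p) (hps : p ≤ s) : p * r ^ (1 / p) ≤ p * r ^ (1 / s) := by
  rcases hp.eq_or_lt with rfl | hp
  · simp
  exact mul_le_mul_of_nonneg_left (rpow_le_rpow_of_exponent_ge' hr0 hr1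
    (one_div_nonneg.2 (hp.trans_le hps).le) (one_div_le_one_div_of_le hp hps)) hp.le

theorem convexOn_mul_rpow_one_div {r : ℝ} (hr0 : 0 ≤ r) (hr1 : r ≤ 1) :
    ConvexOn ℝ (Ici 0) (fun p => p * r ^ (1 / p)) := by
  refine ConvexOn.Ici_of_Ioi ?_ (zero_mul _) fun x hx t ht => ?_
  · simpa only [one_div] using (convexOn_rpow_left_Ioi hr0).mul_comp_inv
  · calc t * x * r ^ (1 / (t * x)) ≤ t * x * r ^ (1 / x) :=
          mul_rpow_one_div_le_mul_rpow_one_div hr0 hr1 (by nlinarith [ht.1])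
            (mul_le_of_le_one_left hx ht.2.le)
      _ = t * (x * r ^ (1 / x)) := mul_assoc _ _ _

theorem ConvexOn.monotoneOn_of_symmetric {f : ℝ → ℝ} {s : Set ℝ} {b : ℝ} (hf : ConvexOn ℝ s f)
    (hs : ∀ x ∈ s, b - x ∈ s) (hsymm : ∀ x ∈ s, f (b - x) = f x) :
    MonotoneOn f (s ∩ Ici (b / 2)) := by
  intro x hx y hy hxy
  have hseg : x ∈ segment ℝ (b - y) y := by
    rw [segment_eq_Icc (by linarith [hy.2.out])]
    exact ⟨by linarith [hx.2.out], hxy⟩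
  simpa [hsymm y hy.1] using hf.le_on_segment (hs y hy.1) hy.1 hseg

theorem ConvexOn.monotoneOn_add_comp_one_sub {f : ℝ → ℝ} (hf : ConvexOn ℝ (Ici 0) f) :
    MonotoneOn (fun x => f x + f (1 - x)) (Icc (1 / 2) 1) := by
  have hreflect : ConvexOn ℝ (Icc 0 1) (fun x => f (1 - x)) := by
    refine ⟨convex_Icc 0 1, fun x hx y hy a b ha hb hab => ?_⟩
    have h := hf.2 (x := 1 - x) (y := 1 - y) (by simp [hx.2]) (by simp [hy.2]) ha hb hab
    convert h using 2
    simp only [smul_eq_mul]; linear_combination -hab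
  refine ((hf.subset Icc_subset_Ici_self (convex_Icc 0 1)).add hreflect).monotoneOn_of_symmetric
    (b := 1) (fun x hx => ⟨by linarith [hx.2], by linarith [hx.1]⟩) (fun x _ => ?_) |>.mono ?_
  · simp only [Pi.add_apply, sub_sub_cancel, add_comm]
  · exact fun x hx => ⟨⟨by linarith [hx.1], hx.2⟩, hx.1⟩

theorem add_le_one_of_mem_stdSimplex {ι : Type*} [Fintype ι] {P : ι → ℝ}
    (hP : P ∈ stdSimplex ℝ ι) {i j : ι} (hij : i ≠ j) : P i + P j ≤ 1 := by
  classical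
  rw [← Finset.sum_pair hij, ← hP.2]
  exact Finset.sum_le_univ_sum_of_nonneg hP.1

theorem single_add_single_mem_stdSimplex {ι : Type*} [Fintype ι] [DecidableEq ι] (i j : ι)
    {a b : ℝ} (ha : 0 ≤ a) (hb : 0 ≤ b) (hab : a + b = 1) :
    Pi.single i a + Pi.single j b ∈ stdSimplex ℝ ι :=
  ⟨(add_nonneg (Pi.single_nonneg.2 ha) (Pi.single_nonneg.2 hb) :
    (0 : ι → ℝ) ≤ Pi.single i a + Pi.single j b), by
    simp [Finset.sum_add_distrib, hab]⟩

theorem sum_mul_rpow_one_div_single_add_single {ι : Type*} [Fintype ι] [DecidableEq ι] {i j : ι}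
    (hij : i ≠ j) (r a b : ℝ) :
    ∑ k, (Pi.single i a + Pi.single j b : ι → ℝ) k
        * r ^ (1 / (Pi.single i a + Pi.single j b : ι → ℝ) k)
      = a * r ^ (1 / a) + b * r ^ (1 / b) := by
  rw [Fintype.sum_eq_add i j hij fun k hk => by simp [hk.1, hk.2]]
  simp [hij, hij.symm]

theorem sum_mul_rpow_one_div_le {ι : Type*} [Fintype ι] {r : ℝ} (hr0 : 0 ≤ r) (hr1 : r ≤ 1)
    {P : ι → ℝ} (hP : P ∈ stdSimplex ℝ ι) {i : ι} {x : ℝ} (hx : 1 / 2 ≤ x) (hx1 : x < 1)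
    (hi : P i ≤ x) (hj : ∀ j ≠ i, P j ≤ 1 - x) :
    ∑ j, P j * r ^ (1 / P j) ≤ x * r ^ (1 / x) + (1 - x) * r ^ (1 / (1 - x)) := by
  classical
  have hexp : r ^ (1 / (1 - x)) ≤ r ^ (1 / x) := rpow_le_rpow_of_exponent_ge' hr0 hr1
    (by positivity) (one_div_le_one_div_of_le (by linarith) (by linarith))
  have hrest : ∑ j ∈ Finset.univ.erase i, P j = 1 - P i := by
    rw [Finset.sum_erase_eq_sub (Finset.mem_univ i), hP.2]
  calc ∑ j, P j * r ^ (1 / P j)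
      = P i * r ^ (1 / P i) + ∑ j ∈ Finset.univ.erase i, P j * r ^ (1 / P j) :=
        (Finset.add_sum_erase _ _ (Finset.mem_univ i)).symm
    _ ≤ P i * r ^ (1 / x) + ∑ j ∈ Finset.univ.erase i, P j * r ^ (1 / (1 - x)) :=
        add_le_add (mul_rpow_one_div_le_mul_rpow_one_div hr0 hr1 (hP.1 i) hi)
          (Finset.sum_le_sum fun j hji => mul_rpow_one_div_le_mul_rpow_one_div hr0 hr1 (hP.1 j)
            (hj j (Finset.ne_of_mem_erase hji)))
    _ = P i * r ^ (1 / x) + (1 - P i) * r ^ (1 / (1 - x)) := by rw [← Finset.sum_mul, hrest]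
    _ ≤ x * r ^ (1 / x) + (1 - x) * r ^ (1 / (1 - x)) := by
        nlinarith [mul_nonneg (sub_nonneg.2 hi) (sub_nonneg.2 hexp)]

theorem sum_mul_rpow_one_div_le_of_forall_le {ι : Type*} [Fintype ι] {r Δ : ℝ} (hr0 : 0 ≤ r)
    (hr1 : r ≤ 1) (hΔ0 : 0 < Δ) (hΔ : Δ ≤ 1 / 2) {P : ι → ℝ} (hP : P ∈ stdSimplex ℝ ι)
    (hcap : ∀ i, P i ≤ 1 - Δ) :
    ∑ i, P i * r ^ (1 / P i) ≤ (1 - Δ) * r ^ (1 / (1 - Δ)) + Δ * r ^ (1 / Δ) := by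
  have : Nonempty ι := by
    by_contra h
    simpa [not_nonempty_iff.1 h] using hP.2
  obtain ⟨i, hi⟩ := Finite.exists_max P
  set x := max (P i) (1 / 2)
  have hx_mem : x ∈ Icc (1 / 2) 1 :=
    ⟨le_max_right _ _, max_le (by linarith [hcap i]) (by norm_num)⟩
  have hΔ_mem : 1 - Δ ∈ Icc (1 / 2) 1 := ⟨by linarith, by linarith⟩
  calc ∑ i, P i * r ^ (1 / P i) ≤ x * r ^ (1 / x) + (1 - x) * r ^ (1 / (1 - x)) :=
        sum_mul_rpow_one_div_le hr0 hr1 hP hx_mem.1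
          (max_lt (by linarith [hcap i]) (by norm_num)) (le_max_left _ _) fun j hji =>
          le_sub_comm.2 (max_le (by linarith [hi j, add_le_one_of_mem_stdSimplex hP hji])
            (by linarith [hi j, add_le_one_of_mem_stdSimplex hP hji]))
    _ ≤ (1 - Δ) * r ^ (1 / (1 - Δ)) + (1 - (1 - Δ)) * r ^ (1 / (1 - (1 - Δ))) :=
        (convexOn_mul_rpow_one_div hr0 hr1).monotoneOn_add_comp_one_sub hx_mem hΔ_mem
          (max_le (hcap i) (by linarith))
    _ = (1 - Δ) * r ^ (1 / (1 - Δ)) + Δ * r ^ (1 / Δ) := by rw [sub_sub_cancel]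

/-- **Convexity of `F_{1,P}(r)` in `P`, and the least-favorable distribution.**
For fixed `r ∈ [0,1]`, `P ↦ ∑_w P_w r^{1/P_w}` is convex on the probability simplex;
and for `Δ < 1/2` (with at least two tokens) its supremum over the `Δ`-regular class
`{P : max_w P_w ≤ 1−Δ}` is attained (at a permutation of the extreme point
`(1−Δ, Δ, 0, …, 0)`) with value `(1−Δ) r^{1/(1−Δ)} + Δ r^{1/Δ}`. -/
theorem F_convex_and_sup_on_regular_class {W : Type*} [Fintype W]
    (r : ℝ) (hr : r ∈ Set.Icc (0:ℝ) 1) :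
    ConvexOn ℝ (stdSimplex ℝ W) (fun P : W → ℝ => ∑ w, P w * r ^ (1 / P w)) ∧
    ∀ Δ : ℝ, 0 < Δ → Δ < 1 / 2 → 2 ≤ Fintype.card W →
      IsGreatest ((fun P : W → ℝ => ∑ w, P w * r ^ (1 / P w)) ''
          {P | P ∈ stdSimplex ℝ W ∧ ∀ w, P w ≤ 1 - Δ})
        ((1 - Δ) * r ^ (1 / (1 - Δ)) + Δ * r ^ (1 / Δ)) := by
  classical
  obtain ⟨hr0, hr1⟩ := hr
  refine ⟨(convexOn_mul_rpow_one_div hr0 hr1).sum_comp_apply.subset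
    (fun P hP => mem_univ_pi.2 hP.1) (convex_stdSimplex ℝ W), fun Δ hΔ0 hΔ hcard => ⟨?_, ?_⟩⟩
  · obtain ⟨i, j, hij⟩ := Fintype.exists_pair_of_one_lt_card hcard
    refine ⟨Pi.single i (1 - Δ) + Pi.single j Δ,
      ⟨single_add_single_mem_stdSimplex i j (by linarith) hΔ0.le (by ring), fun k => ?_⟩,
      sum_mul_rpow_one_div_single_add_single hij r _ _⟩
    simp only [Pi.add_apply, Pi.single_apply]
    split_ifs with hki hkj <;> [exact absurd (hki.symm.trans hkj) hij; linarith; linarith; linarith]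
  · rintro _ ⟨P, ⟨hP, hcap⟩, rfl⟩
    exact sum_mul_rpow_one_div_le_of_forall_le hr0 hr1 hΔ0 hΔ.le hP hcap
end
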